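/- Let Φ(t,y) be a cocycle of invertible linear maps over a flow y·t on a compact metric space Y, and suppose (X₁, X̃₁) and (X₂, X̃₂) are two exponentially separated pairs of complementary invariant subbundles of ℝⁿ × Y with dim X̃₁ = dim X̃₂ (fiberwise). Then X₁ = X₂ and X̃₁ = X̃₂. -/

import Mathlib

/-!
Exponential separation of `(X, X')` makes `Φ(t, y) w` negligible against `Φ(t, y) v` as
`t → ∞` whenever `w ∈ X'(y)` and `v ∉ X'(y)`. If `X₁'(y)` and `X₂'(y)` were incomparable, a
vector of `X₁'(y) \ X₂'(y)` and one of `X₂'(y) \ X₁'(y)` would each be negligible against the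
other; so one contains the other, and equal dimensions give `X₁' = X₂'`. Running time backwards,
the cocycle identity and invariance make `(X', X)` a separated pair for `t ↦ Φ(-t, y)`, and the
same argument gives `X₁ = X₂`.
-/

open Filter Asymptotics Module Topology

section Separation

variable {E F : Type*} [NormedAddCommGroup E] [NormedSpace ℝ E]
  [NormedAddCommGroup F] [NormedSpace ℝ F]

def SeparatesWith (T : E →L[ℝ] F) (U U' : Submodule ℝ E) (c : ℝ) : Prop :=
  ∀ x ∈ U, ∀ x' ∈ U', ‖x‖ * ‖T x'‖ ≤ c * (‖x'‖ * ‖T x‖)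

-- Injectivity rules out the junk case `‖T x‖ = 0`, where the quotient is `0`.
theorem separatesWith_of_unit_ratio_le {T : E →L[ℝ] F} (hT : Function.Injective T)
    {U U' : Submodule ℝ E} {c : ℝ}
    (h : ∀ x ∈ U, ∀ x' ∈ U', ‖x‖ = 1 → ‖x'‖ = 1 → ‖T x'‖ / ‖T x‖ ≤ c) :
    SeparatesWith T U U' c := by
  intro x hx x' hx'
  rcases eq_or_ne x 0 with rfl | hx0
  · simp
  rcases eq_or_ne x' 0 with rfl | hx'0
  · simp
  have hTx : 0 < ‖T x‖ := norm_pos_iff.2 ((map_ne_zero_iff T hT).2 hx0)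
  have hunit := h _ (U.smul_mem ‖x‖⁻¹ hx) _ (U'.smul_mem ‖x'‖⁻¹ hx')
    (norm_smul_inv_norm hx0) (norm_smul_inv_norm hx'0)
  simp only [map_smul, norm_smul, norm_inv, norm_norm] at hunit
  rw [div_le_iff₀ (by positivity)] at hunit
  field_simp at hunit
  linarith

theorem SeparatesWith.swap_of_leftInverse {T : E →L[ℝ] F} {S : F →L[ℝ] E}
    (hST : Function.LeftInverse S T) {U U' : Submodule ℝ E} {c : ℝ}
    (h : SeparatesWith S (U.map T.toLinearMap) (U'.map T.toLinearMap) c) :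
    SeparatesWith T U' U c := by
  intro u hu u' hu'
  have := h (T u') (Submodule.mem_map_of_mem hu') (T u) (Submodule.mem_map_of_mem hu)
  rw [hST, hST] at this
  linarith [mul_comm ‖u‖ ‖T u'‖, mul_comm ‖u'‖ ‖T u‖]

variable {ι : Type*} {l : Filter ι} {A : ι → E →L[ℝ] F}

def Dominates (l : Filter ι) (A : ι → E →L[ℝ] F) (U U' : Submodule ℝ E) : Prop :=
  ∀ x ∈ U, x ≠ 0 → ∀ x' ∈ U', (fun t => A t x') =o[l] fun t => A t x

theorem dominates_of_separatesWith {U U' : Submodule ℝ E} {r : ι → ℝ}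
    (hr : Tendsto r l (𝓝 0)) (h : ∀ᶠ t in l, SeparatesWith (A t) U U' (r t)) :
    Dominates l A U U' := by
  intro x hx hx0 x' hx'
  have hsmall : (fun t => r t • A t x) =o[l] fun t => A t x := by
    simpa using ((isLittleO_one_iff ℝ).2 hr).smul_isBigO (isBigO_refl (fun t => A t x) l)
  refine IsBigO.trans_isLittleO (IsBigO.of_bound (‖x'‖ / ‖x‖) ?_) hsmall
  filter_upwards [h] with t ht
  have hr_abs := mul_le_mul_of_nonneg_right (le_abs_self (r t))
    (mul_nonneg (norm_nonneg x') (norm_nonneg (A t x)))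
  rw [norm_smul, Real.norm_eq_abs, div_mul_eq_mul_div, le_div_iff₀ (norm_pos_iff.2 hx0)]
  linarith [ht x hx x' hx', mul_comm ‖x‖ ‖A t x'‖]

variable {U₁ U₁' U₂ U₂' : Submodule ℝ E}

theorem Dominates.isLittleO_of_notMem (h : Dominates l A U₁ U₁') (hc : Codisjoint U₁ U₁')
    {w v : E} (hw : w ∈ U₁') (hv : v ∉ U₁') :
    (fun t => A t w) =o[l] fun t => A t v := by
  obtain ⟨a, ha, a', ha', rfl⟩ := Submodule.mem_sup.1 (hc.eq_top ▸ Submodule.mem_top (x := v))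
  have ha0 : a ≠ 0 := by
    rintro rfl
    exact hv (by simpa using ha')
  have hbig : (fun t => A t a) =O[l] fun t => A t (a + a') := by
    simpa [add_comm] using (h a ha ha0 a' ha').right_isBigO_add
  exact (h a ha ha0 w hw).trans_isBigO hbig

theorem Dominates.le_or_le [l.NeBot] (hA : ∀ t, Function.Injective (A t))
    (h₁ : Dominates l A U₁ U₁') (h₂ : Dominates l A U₂ U₂')
    (hc₁ : Codisjoint U₁ U₁') (hc₂ : Codisjoint U₂ U₂') : U₁' ≤ U₂' ∨ U₂' ≤ U₁' := by
  by_contra! hne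
  obtain ⟨⟨w, hw₁, hw₂⟩, ⟨v, hv₂, hv₁⟩⟩ :=
    And.imp SetLike.not_le_iff_exists.1 SetLike.not_le_iff_exists.1 hne
  have hw0 : w ≠ 0 := fun h => hw₂ (h ▸ U₂'.zero_mem)
  exact isLittleO_irrefl (Frequently.of_forall fun t => (map_ne_zero_iff _ (hA t)).2 hw0)
    ((h₁.isLittleO_of_notMem hc₁ hw₁ hv₁).trans (h₂.isLittleO_of_notMem hc₂ hv₂ hw₂))

theorem Dominates.eq_of_finrank_eq [FiniteDimensional ℝ E] [l.NeBot]
    (hA : ∀ t, Function.Injective (A t))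
    (h₁ : Dominates l A U₁ U₁') (h₂ : Dominates l A U₂ U₂')
    (hc₁ : Codisjoint U₁ U₁') (hc₂ : Codisjoint U₂ U₂')
    (hdim : finrank ℝ U₁' = finrank ℝ U₂') : U₁' = U₂' :=
  (h₁.le_or_le hA h₂ hc₁ hc₂).elim (Submodule.eq_of_le_of_finrank_eq · hdim)
    fun hle => (Submodule.eq_of_le_of_finrank_eq hle hdim.symm).symm

end Separation

section SkewProduct

variable {Y E : Type*} [NormedAddCommGroup E] [NormedSpace ℝ E]
  {φ : ℝ → Y → Y} {Φ : ℝ → Y → E →L[ℝ] E}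

def ExpSeparated (Φ : ℝ → Y → E →L[ℝ] E) (X X' : Y → Submodule ℝ E) : Prop :=
  ∃ K > (0:ℝ), ∃ ν > (0:ℝ), ∀ t : ℝ, 0 ≤ t → ∀ y : Y,
    ∀ x ∈ X y, ∀ x' ∈ X' y, ‖x‖ = 1 → ‖x'‖ = 1 →
      ‖Φ t y x'‖ / ‖Φ t y x‖ ≤ K * Real.exp (-ν * t)

theorem tendsto_const_mul_exp_neg_mul_atTop (K : ℝ) {ν : ℝ} (hν : 0 < ν) :
    Tendsto (fun t => K * Real.exp (-ν * t)) atTop (𝓝 0) := by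
  simpa using (Real.tendsto_exp_atBot.comp
    (tendsto_id.const_mul_atTop_of_neg (neg_lt_zero.2 hν))).const_mul K

variable {X X' : Y → Submodule ℝ E}

theorem ExpSeparated.dominates (h : ExpSeparated Φ X X')
    (hinj : ∀ t y, Function.Injective (Φ t y)) (y : Y) :
    Dominates atTop (fun t => Φ t y) (X y) (X' y) := by
  obtain ⟨K, -, ν, hν, hsep⟩ := h
  exact dominates_of_separatesWith (tendsto_const_mul_exp_neg_mul_atTop K hν)
    ((eventually_ge_atTop 0).mono fun t ht => separatesWith_of_unit_ratio_le (hinj t y) (hsep t ht y))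

theorem ExpSeparated.dominates_neg (h : ExpSeparated Φ X X')
    (hΦ0 : ∀ y, Φ 0 y = ContinuousLinearMap.id ℝ E)
    (hcoc : ∀ s t y, Φ (s + t) y = (Φ s (φ t y)).comp (Φ t y))
    (hinj : ∀ t y, Function.Injective (Φ t y))
    (hinv : ∀ t y, (X y).map (Φ t y).toLinearMap = X (φ t y))
    (hinv' : ∀ t y, (X' y).map (Φ t y).toLinearMap = X' (φ t y)) (y : Y) :
    Dominates atTop (fun t => Φ (-t) y) (X' y) (X y) := by
  obtain ⟨K, -, ν, hν, hsep⟩ := h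
  refine dominates_of_separatesWith (tendsto_const_mul_exp_neg_mul_atTop K hν)
    ((eventually_ge_atTop 0).mono fun t ht => ?_)
  refine SeparatesWith.swap_of_leftInverse (S := Φ t (φ (-t) y)) (fun v => ?_) ?_
  · simpa [hΦ0] using congr($(hcoc t (-t) y) v).symm
  · rw [hinv, hinv']
    exact separatesWith_of_unit_ratio_le (hinj _ _) (hsep t ht _)

end SkewProduct

theorem exp_separated_unique_general {n : ℕ} {Y : Type*}
    (φ : ℝ → Y → Y)
    (Φ : ℝ → Y → ((Fin n → ℝ) →L[ℝ] (Fin n → ℝ)))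
    (hΦ0 : ∀ y, Φ 0 y = ContinuousLinearMap.id ℝ (Fin n → ℝ))
    (hcoc : ∀ s t y, Φ (s + t) y = (Φ s (φ t y)).comp (Φ t y))
    (hbij : ∀ t y, Function.Bijective (Φ t y))
    (X₁ X₁' X₂ X₂' : Y → Submodule ℝ (Fin n → ℝ))
    (hcompl₁ : ∀ y, IsCompl (X₁ y) (X₁' y)) (hcompl₂ : ∀ y, IsCompl (X₂ y) (X₂' y))
    (hinv₁ : ∀ t y, (X₁ y).map (Φ t y).toLinearMap = X₁ (φ t y))
    (hinv₁' : ∀ t y, (X₁' y).map (Φ t y).toLinearMap = X₁' (φ t y))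
    (hinv₂ : ∀ t y, (X₂ y).map (Φ t y).toLinearMap = X₂ (φ t y))
    (hinv₂' : ∀ t y, (X₂' y).map (Φ t y).toLinearMap = X₂' (φ t y))
    (hsep₁ : ∃ K > (0:ℝ), ∃ ν > (0:ℝ), ∀ t : ℝ, 0 ≤ t → ∀ y : Y,
      ∀ x ∈ X₁ y, ∀ x' ∈ X₁' y, ‖x‖ = 1 → ‖x'‖ = 1 →
        ‖Φ t y x'‖ / ‖Φ t y x‖ ≤ K * Real.exp (-ν * t))
    (hsep₂ : ∃ K > (0:ℝ), ∃ ν > (0:ℝ), ∀ t : ℝ, 0 ≤ t → ∀ y : Y,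
      ∀ x ∈ X₂ y, ∀ x' ∈ X₂' y, ‖x‖ = 1 → ‖x'‖ = 1 →
        ‖Φ t y x'‖ / ‖Φ t y x‖ ≤ K * Real.exp (-ν * t))
    (hdim : ∀ y, Module.finrank ℝ (X₁' y) = Module.finrank ℝ (X₂' y)) :
    X₁ = X₂ ∧ X₁' = X₂' := by
  have hinj t y : Function.Injective (Φ t y) := (hbij t y).1
  have hsep₁ : ExpSeparated Φ X₁ X₁' := hsep₁
  have hsep₂ : ExpSeparated Φ X₂ X₂' := hsep₂
  have hdim' y : finrank ℝ (X₁ y) = finrank ℝ (X₂ y) := by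
    have h₁ := Submodule.finrank_add_eq_of_isCompl (hcompl₁ y)
    have h₂ := Submodule.finrank_add_eq_of_isCompl (hcompl₂ y)
    have := hdim y
    omega
  refine ⟨funext fun y => ?_, funext fun y => ?_⟩
  · exact Dominates.eq_of_finrank_eq (fun t => hinj (-t) y)
      (hsep₁.dominates_neg hΦ0 hcoc hinj hinv₁ hinv₁' y)
      (hsep₂.dominates_neg hΦ0 hcoc hinj hinv₂ hinv₂' y)
      (hcompl₁ y).symm.codisjoint (hcompl₂ y).symm.codisjoint (hdim' y)
  · exact Dominates.eq_of_finrank_eq (fun t => hinj t y) (hsep₁.dominates hinj y)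
      (hsep₂.dominates hinj y) (hcompl₁ y).codisjoint (hcompl₂ y).codisjoint (hdim y)

/-- Uniqueness of exponentially separated pairs of complementary invariant
subbundles of `ℝⁿ × Y` for a linear skew-product flow over a compact base,
when the "small" bundles have equal fiber dimensions. -/
theorem exp_separated_unique {n : ℕ} {Y : Type*} [MetricSpace Y] [CompactSpace Y]
    (φ : ℝ → Y → Y) (hφ0 : ∀ y, φ 0 y = y) (hφadd : ∀ s t y, φ (s + t) y = φ s (φ t y))
    (Φ : ℝ → Y → ((Fin n → ℝ) →L[ℝ] (Fin n → ℝ)))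
    (hΦ0 : ∀ y, Φ 0 y = ContinuousLinearMap.id ℝ (Fin n → ℝ))
    (hcoc : ∀ s t y, Φ (s + t) y = (Φ s (φ t y)).comp (Φ t y))
    (hbij : ∀ t y, Function.Bijective (Φ t y))
    (X₁ X₁' X₂ X₂' : Y → Submodule ℝ (Fin n → ℝ))
    (hcompl₁ : ∀ y, IsCompl (X₁ y) (X₁' y)) (hcompl₂ : ∀ y, IsCompl (X₂ y) (X₂' y))
    (hinv₁ : ∀ t y, (X₁ y).map (Φ t y).toLinearMap = X₁ (φ t y))
    (hinv₁' : ∀ t y, (X₁' y).map (Φ t y).toLinearMap = X₁' (φ t y))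
    (hinv₂ : ∀ t y, (X₂ y).map (Φ t y).toLinearMap = X₂ (φ t y))
    (hinv₂' : ∀ t y, (X₂' y).map (Φ t y).toLinearMap = X₂' (φ t y))
    (hsep₁ : ∃ K > (0:ℝ), ∃ ν > (0:ℝ), ∀ t : ℝ, 0 ≤ t → ∀ y : Y,
      ∀ x ∈ X₁ y, ∀ x' ∈ X₁' y, ‖x‖ = 1 → ‖x'‖ = 1 →
        ‖Φ t y x'‖ / ‖Φ t y x‖ ≤ K * Real.exp (-ν * t))
    (hsep₂ : ∃ K > (0:ℝ), ∃ ν > (0:ℝ), ∀ t : ℝ, 0 ≤ t → ∀ y : Y,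
      ∀ x ∈ X₂ y, ∀ x' ∈ X₂' y, ‖x‖ = 1 → ‖x'‖ = 1 →
        ‖Φ t y x'‖ / ‖Φ t y x‖ ≤ K * Real.exp (-ν * t))
    (hdim : ∀ y, Module.finrank ℝ (X₁' y) = Module.finrank ℝ (X₂' y)) :
    X₁ = X₂ ∧ X₁' = X₂' :=
  exp_separated_unique_general φ Φ hΦ0 hcoc hbij X₁ X₁' X₂ X₂' hcompl₁ hcompl₂ hinv₁ hinv₁' hinv₂
    hinv₂' hsep₁ hsep₂ hdim
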